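/- Let 1 → ℤ → Γ →^ν Q → 1 be a central extension of groups and ρ': Γ → ℝ⁺ a homomorphism whose image is a finitely generated free abelian group of rank k ≥ 1 such that ρ'(ℤ) is infinite cyclic. Then there exists a finite-index subgroup G of ρ'(Γ) with G = ρ'(ℤ) × ℤ^{k−1}, and Γ' = ρ'^{−1}(G) is a finite-index subgroup of Γ containing a subgroup H' = ρ'^{−1}(ℤ^{k−1}) that ν maps isomorphically onto a finite-index subgroup Q' of Q. -/
import Mathlib

private def evHom (m : ℕ) (i : Fin (m + 1)) :
    Multiplicative (Fin (m + 1) → ℤ) →* Multiplicative ℤ where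
  toFun x := Multiplicative.ofAdd (Multiplicative.toAdd x i)
  map_one' := rfl
  map_mul' _ _ := rfl

private lemma mem_ker_evHom {m : ℕ} {i : Fin (m + 1)} {x : Multiplicative (Fin (m + 1) → ℤ)} :
    x ∈ (evHom m i).ker ↔ Multiplicative.toAdd x i = 0 := by
  simp [evHom, MonoidHom.mem_ker, MonoidHom.coe_mk, ofAdd_eq_one]

private noncomputable def kerEquivAux (m : ℕ) (i : Fin (m + 1)) :
    (evHom m i).ker ≃* Multiplicative (Fin m → ℤ) where
  toFun x := Multiplicative.ofAdd fun j => Multiplicative.toAdd x.1 (i.succAbove j)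
  invFun y := ⟨Multiplicative.ofAdd (i.insertNth 0 (Multiplicative.toAdd y)), by
    rw [mem_ker_evHom]
    simp⟩
  left_inv x := by
    have hx : Multiplicative.toAdd x.1 i = 0 := mem_ker_evHom.mp x.2
    apply Subtype.ext
    apply Multiplicative.ofAdd.symm.injective
    funext j
    refine Fin.succAboveCases i ?_ ?_ j
    · simpa using hx.symm
    · intro j'
      simp
  right_inv y := by
    apply Multiplicative.ofAdd.symm.injective
    funext j
    simp
  map_mul' x y := rfl

/-- Let `1 → ℤ → Γ →^ν Q → 1` be a central extension and
`ρ' : Γ → ℝ⁺` a homomorphism whose image is free abelian of rank `k ≥ 1` with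
`ρ'(ℤ)` infinite cyclic.  Then there is a finite-index subgroup
`G = ρ'(ℤ) × ℤ^{k−1}` of `ρ'(Γ)`, `Γ' = ρ'⁻¹(G)` has finite index in `Γ`, and
`H' = ρ'⁻¹(ℤ^{k−1})` is mapped by `ν` isomorphically onto a finite-index
subgroup `Q'` of `Q`. -/
theorem statement12
    {Γ Q : Type*} [Group Γ] [Group Q]
    (Z : Subgroup Γ) (hZcentral : Z ≤ Subgroup.center Γ)
    (hZ : Nonempty (Z ≃* Multiplicative ℤ))
    (ν : Γ →* Q) (hνsurj : Function.Surjective ν) (hker : ν.ker = Z)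
    (ρ' : Γ →* ℝˣ) (hpos : ∀ g, (0 : ℝ) < (ρ' g : ℝ))
    (k : ℕ) (hk : 1 ≤ k)
    (hrange : Nonempty (ρ'.range ≃* Multiplicative (Fin k → ℤ)))
    (hZim : Nonempty ((Z.map ρ') ≃* Multiplicative ℤ))
    (hZinj : Set.InjOn ρ' (Z : Set Γ)) :
    ∃ G B : Subgroup ℝˣ,
      G ≤ ρ'.range ∧ (G.subgroupOf ρ'.range).FiniteIndex ∧
      Z.map ρ' ≤ G ∧ B ≤ G ∧
      (Z.map ρ') ⊓ B = ⊥ ∧ (Z.map ρ') ⊔ B = G ∧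
      Nonempty (B ≃* Multiplicative (Fin (k - 1) → ℤ)) ∧
      (G.comap ρ').FiniteIndex ∧
      Set.InjOn ν ((B.comap ρ' : Subgroup Γ) : Set Γ) ∧
      (((B.comap ρ').map ν).FiniteIndex) := by
  obtain ⟨m, rfl⟩ : ∃ m, k = m + 1 := ⟨k - 1, (Nat.succ_pred_eq_of_pos hk).symm⟩
  obtain ⟨e⟩ := hrange
  obtain ⟨ψ⟩ := hZim
  set A₀ : Subgroup ℝˣ := Z.map ρ' with hA₀def
  have hA₀le : A₀ ≤ ρ'.range := Subgroup.map_le_range ρ' Z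
  set A₁ : Subgroup ρ'.range := A₀.subgroupOf ρ'.range with hA₁def
  set A₂ : Subgroup (Multiplicative (Fin (m + 1) → ℤ)) := A₁.map e.toMonoidHom with hA₂def
  -- a generator of A₂
  let φ : Multiplicative ℤ ≃* A₂ :=
    (ψ.symm.trans (Subgroup.subgroupOfEquivOfLe hA₀le).symm).trans
      (Subgroup.equivMapOfInjective A₁ e.toMonoidHom e.injective)
  set g : Multiplicative (Fin (m + 1) → ℤ) := (φ (Multiplicative.ofAdd 1)).1 with hgdef
  have hgA : g ∈ A₂ := (φ (Multiplicative.ofAdd 1)).2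
  have hgen : ∀ x ∈ A₂, ∃ n : ℤ, x = g ^ n := by
    intro x hx
    refine ⟨Multiplicative.toAdd (φ.symm ⟨x, hx⟩), ?_⟩
    have h1 : (⟨x, hx⟩ : A₂) = φ (Multiplicative.ofAdd 1) ^
        Multiplicative.toAdd (φ.symm ⟨x, hx⟩) := by
      rw [← map_zpow, ← ofAdd_zsmul]
      simp
    have := congrArg Subtype.val h1
    simpa using this
  have hg1 : g ≠ 1 := by
    intro h
    have h1 : φ (Multiplicative.ofAdd 1) = 1 := Subtype.ext h
    have := φ.injective (h1.trans (map_one φ).symm)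
    simp [ofAdd_eq_one] at this
  have hw : Multiplicative.toAdd g ≠ 0 := by
    intro h
    exact hg1 (toAdd_eq_zero.mp h)
  obtain ⟨i, hwi⟩ : ∃ i, Multiplicative.toAdd g i ≠ 0 := by
    by_contra h
    push_neg at h
    exact hw (funext h)
  set B₂ := (evHom m i).ker with hB₂def
  set G₂ := A₂ ⊔ B₂ with hG₂def
  set C := (Subgroup.zpowers (Multiplicative.ofAdd (Multiplicative.toAdd g i))).comap (evHom m i)
    with hCdef
  have hevsurj : Function.Surjective (evHom m i) := by
    intro n
    refine ⟨Multiplicative.ofAdd (Pi.single i (Multiplicative.toAdd n)), ?_⟩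
    simp [evHom]
  have hCindex : C.index = (Multiplicative.toAdd g i).natAbs := by
    rw [hCdef, Subgroup.index_comap_of_surjective _ hevsurj]
    have hz : Subgroup.zpowers (Multiplicative.ofAdd (Multiplicative.toAdd g i))
        = AddSubgroup.toSubgroup (AddSubgroup.zmultiples (Multiplicative.toAdd g i)) := by
      ext x
      rw [Subgroup.mem_zpowers_iff]
      have hmem : x ∈ AddSubgroup.toSubgroup (AddSubgroup.zmultiples (Multiplicative.toAdd g i))
          ↔ Multiplicative.toAdd x ∈ AddSubgroup.zmultiples (Multiplicative.toAdd g i) :=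
        Iff.rfl
      rw [hmem, AddSubgroup.mem_zmultiples_iff]
      constructor
      · rintro ⟨n, rfl⟩
        exact ⟨n, by rw [toAdd_zpow]; simp⟩
      · rintro ⟨n, hn⟩
        exact ⟨n, by rw [← ofAdd_zsmul, hn]; simp⟩
    rw [hz, AddSubgroup.index_toSubgroup, Int.index_zmultiples]
  haveI hCfin : C.FiniteIndex := ⟨by rw [hCindex]; exact Int.natAbs_ne_zero.mpr hwi⟩
  have hCG : C ≤ G₂ := by
    intro x hx
    rw [hCdef, Subgroup.mem_comap, Subgroup.mem_zpowers_iff] at hx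
    obtain ⟨n, hn⟩ := hx
    have hxi : Multiplicative.toAdd x i = n * Multiplicative.toAdd g i := by
      have := congrArg Multiplicative.toAdd hn
      simpa [evHom, toAdd_zpow, smul_eq_mul] using this.symm
    have hb : g⁻¹ ^ n * x ∈ B₂ := by
      rw [hB₂def, mem_ker_evHom]
      simp [toAdd_zpow, smul_eq_mul, hxi]
    have hx' : x = g ^ n * (g⁻¹ ^ n * x) := by group
    rw [hx']
    exact mul_mem (Subgroup.mem_sup_left (zpow_mem hgA n)) (Subgroup.mem_sup_right hb)
  haveI hG₂fin : G₂.FiniteIndex := Subgroup.finiteIndex_of_le hCG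
  have hABbot : A₂ ⊓ B₂ = ⊥ := by
    rw [eq_bot_iff]
    rintro x ⟨hxA, hxB⟩
    obtain ⟨n, rfl⟩ := hgen x hxA
    have hxB' : Multiplicative.toAdd (g ^ n) i = 0 := mem_ker_evHom.mp hxB
    have h0 : n * Multiplicative.toAdd g i = 0 := by
      simpa [toAdd_zpow, smul_eq_mul] using hxB'
    have hn0 : n = 0 := by
      rcases mul_eq_zero.mp h0 with h | h
      · exact h
      · exact absurd h hwi
    simp [hn0, Subgroup.mem_bot]
  -- transfer back
  have hι : Function.Injective ρ'.range.subtype := ρ'.range.subtype_injective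
  have hesurj : Function.Surjective e.toMonoidHom := e.surjective
  set G₁ := G₂.comap e.toMonoidHom with hG₁def
  set B₁ := B₂.comap e.toMonoidHom with hB₁def
  have hA₁ : A₂.comap e.toMonoidHom = A₁ :=
    Subgroup.comap_map_eq_self_of_injective e.injective A₁
  have hG₁ : A₁ ⊔ B₁ = G₁ := by
    rw [hG₁def, hB₁def, ← hA₁]
    exact Subgroup.comap_sup_eq (f := e.toMonoidHom) A₂ B₂ hesurj
  have hAB₁ : A₁ ⊓ B₁ = ⊥ := by
    rw [hB₁def, ← hA₁, ← Subgroup.comap_inf, hABbot, MonoidHom.comap_bot,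
      MonoidHom.ker_eq_bot_iff]
    exact e.injective
  set G : Subgroup ℝˣ := G₁.map ρ'.range.subtype with hGdef
  set B : Subgroup ℝˣ := B₁.map ρ'.range.subtype with hBdef
  have hA₀map : A₁.map ρ'.range.subtype = A₀ := by
    rw [hA₁def, Subgroup.subgroupOf_map_subtype]
    exact inf_eq_left.mpr hA₀le
  have hGsub : G.subgroupOf ρ'.range = G₁ :=
    Subgroup.comap_map_eq_self_of_injective hι G₁
  have hG₁index : G₁.index = G₂.index := Subgroup.index_comap_of_surjective _ hesurj
  have hA₁G₁ : A₁ ≤ G₁ := hG₁ ▸ le_sup_left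
  have hB₁G₁ : B₁ ≤ G₁ := hG₁ ▸ le_sup_right
  have hZG : A₀ ≤ G := hA₀map ▸ Subgroup.map_mono hA₁G₁
  have hBG : B ≤ G := Subgroup.map_mono hB₁G₁
  have hinf : A₀ ⊓ B = ⊥ := by
    rw [← hA₀map, hBdef, ← Subgroup.map_inf _ _ _ hι, hAB₁, Subgroup.map_bot]
  have hsup : A₀ ⊔ B = G := by
    rw [← hA₀map, hBdef, ← Subgroup.map_sup, hG₁]
  have hB₂eq : B₁.map e.toMonoidHom = B₂ :=
    Subgroup.map_comap_eq_self_of_surjective hesurj B₂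
  have hΓ' : (G.comap ρ').FiniteIndex := by
    refine ⟨?_⟩
    rw [Subgroup.index_comap]
    have h1 : G.relIndex ρ'.range = G₁.index := congrArg Subgroup.index hGsub
    rw [h1, hG₁index]
    exact hG₂fin.index_ne_zero
  refine ⟨G, B, Subgroup.map_subtype_le _, ?_, hZG, hBG, hinf, hsup, ?_, hΓ', ?_, ?_⟩
  · exact ⟨by rw [hGsub, hG₁index]; exact hG₂fin.index_ne_zero⟩
  · exact ⟨(((Subgroup.equivMapOfInjective B₁ _ hι).symm.trans
      (Subgroup.equivMapOfInjective B₁ e.toMonoidHom e.injective)).trans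
      (MulEquiv.subgroupCongr hB₂eq)).trans (kerEquivAux m i)⟩
  · intro x hx y hy hxy
    have hx' : ρ' x ∈ B := Subgroup.mem_comap.mp hx
    have hy' : ρ' y ∈ B := Subgroup.mem_comap.mp hy
    have hmem : x⁻¹ * y ∈ Z := by
      rw [← hker, MonoidHom.mem_ker, map_mul, map_inv, hxy]
      group
    have hA : ρ' (x⁻¹ * y) ∈ A₀ := ⟨x⁻¹ * y, hmem, rfl⟩
    have hB' : ρ' (x⁻¹ * y) ∈ B := by
      rw [map_mul, map_inv]
      exact mul_mem (inv_mem hx') hy'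
    have hbot : ρ' (x⁻¹ * y) ∈ (⊥ : Subgroup ℝˣ) := hinf ▸ Subgroup.mem_inf.mpr ⟨hA, hB'⟩
    have h1 : ρ' (x⁻¹ * y) = 1 := Subgroup.mem_bot.mp hbot
    have h2 : x⁻¹ * y = 1 := hZinj hmem Z.one_mem (by rw [h1, map_one])
    exact inv_mul_eq_one.mp h2
  · have hmapeq : (B.comap ρ').map ν = (G.comap ρ').map ν := by
      refine le_antisymm (Subgroup.map_mono (Subgroup.comap_mono hBG)) ?_
      rintro q ⟨γ, hγ, rfl⟩
      have hγ' : ρ' γ ∈ G := hγ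
      rw [← hsup] at hγ'
      obtain ⟨a, ha, b, hb, hab⟩ := Subgroup.mem_sup.mp hγ'
      obtain ⟨z, hz, rfl⟩ := ha
      have hz1 : ν z = 1 := by
        rw [← MonoidHom.mem_ker, hker]
        exact hz
      refine ⟨z⁻¹ * γ, ?_, ?_⟩
      · show ρ' (z⁻¹ * γ) ∈ B
        rw [map_mul, map_inv, ← hab]
        have : (ρ' z)⁻¹ * (ρ' z * b) = b := by group
        rw [this]
        exact hb
      · rw [map_mul, map_inv, hz1]
        group
    rw [hmapeq]
    refine ⟨?_⟩
    rw [Subgroup.index_map, ν.range_eq_top_of_surjective hνsurj, Subgroup.index_top, mul_one]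
    exact (Subgroup.finiteIndex_of_le le_sup_left).index_ne_zero
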